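/- arXiv:2303.14039 — 3 statements merged into one kernel-verified Lean document; each statement's English description precedes it below -/
import Mathlib

section
/- Let k ≥ 1 be an integer and let G be a connected finite simple graph on n ≥ 1 vertices with minimum degree at least k. Then there exists a connected subgraph H of G with at most 3·⌊n/(k+1)⌋ − 2 vertices such that every vertex of G is at graph distance at most 2 (in G) from some vertex of H. -/
/-!
Grow a set `S` of vertices at pairwise distance at least `3` together with a connected
subgraph `H ⊇ S` on at most `3|S| - 2` vertices. While some vertex is at distance at least `3`
from all of `S`, a shortest path to it from the nearest vertex of `S` has a vertex `u` at
distance exactly `3` from that vertex and at least `3` from all of `S`; adding `u` to `S` and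
the first three edges of the path to `H` preserves both invariants. When the process stops,
`S` dominates within distance `2`, and since the closed neighbourhoods of the vertices of `S`
are pairwise disjoint and each has at least `k + 1` vertices, `|S| ≤ ⌊n/(k+1)⌋`.
-/

open Finset

namespace SimpleGraph

variable {V : Type*} {G : SimpleGraph V}

section Packing

variable [Fintype V] [DecidableRel G.Adj] [DecidableEq V]

lemma exists_walk_length_le_one_of_mem_insert_neighborFinset {s x : V}
    (hx : x ∈ insert s (G.neighborFinset s)) : ∃ p : G.Walk s x, p.length ≤ 1 := by
  rcases mem_insert.mp hx with rfl | hadj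
  · exact ⟨.nil, zero_le_one⟩
  · exact ⟨((G.mem_neighborFinset _ _).mp hadj).toWalk, le_rfl⟩

lemma card_mul_succ_le_card_of_pairwise_three_le_dist {k : ℕ} (hdeg : ∀ v, k ≤ G.degree v)
    {S : Finset V} (hS : (S : Set V).Pairwise (3 ≤ G.dist · ·)) :
    #S * (k + 1) ≤ Fintype.card V := by
  have hdisj : (S : Set V).PairwiseDisjoint fun s => insert s (G.neighborFinset s) := by
    intro s hs t ht hst
    refine Finset.disjoint_left.mpr fun x hxs hxt => ?_
    obtain ⟨p, hp⟩ := exists_walk_length_le_one_of_mem_insert_neighborFinset hxs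
    obtain ⟨q, hq⟩ := exists_walk_length_le_one_of_mem_insert_neighborFinset hxt
    have hst_le : G.dist s t ≤ (p.append q.reverse).length := dist_le _
    have := hS hs ht hst
    simp only [Walk.length_append, Walk.length_reverse] at hst_le
    omega
  calc #S * (k + 1) = ∑ _s ∈ S, (k + 1) := by rw [sum_const, smul_eq_mul]
    _ ≤ ∑ s ∈ S, #(insert s (G.neighborFinset s)) := sum_le_sum fun s _ => by
        rw [card_insert_of_notMem (G.notMem_neighborFinset_self s), card_neighborFinset_eq_degree]
        exact Nat.succ_le_succ (hdeg s)
    _ = #(S.biUnion fun s => insert s (G.neighborFinset s)) := (card_biUnion hdisj).symm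
    _ ≤ Fintype.card V := card_le_univ _

end Packing

lemma Subgraph.Connected.sup_toSubgraph {H : G.Subgraph} (hH : H.Connected) {s u : V}
    (hs : s ∈ H.verts) (p : G.Walk s u) : (H ⊔ p.toSubgraph).Connected :=
  Subgraph.connected_sup hH.preconnected p.toSubgraph_connected.preconnected
    ⟨s, hs, p.start_mem_verts_toSubgraph⟩

lemma Subgraph.ncard_verts_sup_toSubgraph_le {H : G.Subgraph} {s u : V} (hs : s ∈ H.verts)
    (p : G.Walk s u) : (H ⊔ p.toSubgraph).verts.ncard ≤ H.verts.ncard + p.length := by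
  classical
  have hverts : (H ⊔ p.toSubgraph).verts = H.verts ∪ ↑p.support.tail.toFinset := by
    ext w
    rw [Subgraph.verts_sup, Walk.verts_toSubgraph, ← Walk.cons_tail_support, List.coe_toFinset]
    simp only [Set.mem_union, Set.mem_ofPred_eq, List.mem_cons]
    constructor
    · rintro (hw | rfl | hw) <;> simp_all
    · rintro (hw | hw) <;> simp_all
  calc (H ⊔ p.toSubgraph).verts.ncard
      ≤ H.verts.ncard + #p.support.tail.toFinset := by
        rw [hverts, ← Set.ncard_coe_finset]; exact Set.ncard_union_le _ _
    _ ≤ H.verts.ncard + p.support.tail.length := by gcongr; exact List.toFinset_card_le _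
    _ = H.verts.ncard + p.length := by simp [Walk.length_support]

lemma Connected.exists_walk_length_eq_to_far_vertex (hconn : G.Connected) {S : Finset V}
    (hS : S.Nonempty) {r : ℕ} {v : V} (hv : ∀ s ∈ S, r ≤ G.dist s v) :
    ∃ s ∈ S, ∃ u, (∀ t ∈ S, r ≤ G.dist t u) ∧ ∃ p : G.Walk s u, p.length = r := by
  obtain ⟨s, hs, hmin⟩ := S.exists_min_image (G.dist · v) hS
  obtain ⟨p, hp⟩ := hconn.exists_walk_length_eq_dist s v
  refine ⟨s, hs, p.getVert r, fun t ht => ?_, p.take r, by simp [hp, hv s hs]⟩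
  have hrest : G.dist (p.getVert r) v ≤ G.dist s v - r := by
    simpa [hp] using dist_le (p.drop r)
  have htri : G.dist t v ≤ G.dist t (p.getVert r) + G.dist (p.getVert r) v :=
    hconn.dist_triangle
  have := hmin t ht
  have := hv s hs
  omega

-- `ncard_add_two_le` is `|H| ≤ 3|S| - 2` without truncated subtraction; it forces `S ≠ ∅`.
structure IsPackingConnector (S : Finset V) (H : G.Subgraph) : Prop where
  pairwise_three_le_dist : (S : Set V).Pairwise (3 ≤ G.dist · ·)
  subset_verts : (S : Set V) ⊆ H.verts
  connected : H.Connected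
  ncard_add_two_le : H.verts.ncard + 2 ≤ 3 * #S

lemma isPackingConnector_singleton (v : V) :
    G.IsPackingConnector {v} (G.singletonSubgraph v) where
  pairwise_three_le_dist := by simp
  subset_verts := by simp
  connected := Subgraph.singletonSubgraph_connected
  ncard_add_two_le := by simp

lemma IsPackingConnector.exists_insert [DecidableEq V] (hconn : G.Connected) {S : Finset V}
    {H : G.Subgraph} (hH : G.IsPackingConnector S H) {v : V}
    (hv : ∀ s ∈ S, 3 ≤ G.dist s v) :
    ∃ u ∉ S, ∃ H' : G.Subgraph, G.IsPackingConnector (insert u S) H' := by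
  have hS : S.Nonempty := card_pos.mp (by have := hH.ncard_add_two_le; omega)
  obtain ⟨s, hs, u, hu, p, hp⟩ := hconn.exists_walk_length_eq_to_far_vertex hS hv
  have huS : u ∉ S := fun h => by simpa using hu u h
  refine ⟨u, huS, H ⊔ p.toSubgraph,
    ⟨?_, ?_, hH.connected.sup_toSubgraph (hH.subset_verts hs) p, ?_⟩⟩
  · rw [coe_insert, Set.pairwise_insert]
    exact ⟨hH.pairwise_three_le_dist, fun t ht _ => ⟨G.dist_comm ▸ hu t ht, hu t ht⟩⟩
  · rw [coe_insert]
    exact Set.insert_subset (Or.inr p.end_mem_verts_toSubgraph)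
      (hH.subset_verts.trans Set.subset_union_left)
  · have := Subgraph.ncard_verts_sup_toSubgraph_le (hH.subset_verts hs) p
    have := hH.ncard_add_two_le
    rw [card_insert_of_notMem huS]
    omega

lemma Connected.exists_isPackingConnector_dominating [Fintype V] (hconn : G.Connected) :
    ∃ S : Finset V, ∃ H : G.Subgraph,
      G.IsPackingConnector S H ∧ ∀ v, ∃ s ∈ S, G.dist s v ≤ 2 := by
  classical
  obtain ⟨v₀⟩ := hconn.nonempty
  obtain ⟨S, hS, hmax⟩ := (univ.filter fun S : Finset V => ∃ H, G.IsPackingConnector S H)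
    |>.exists_max_image card ⟨{v₀}, by simpa using ⟨_, isPackingConnector_singleton v₀⟩⟩
  obtain ⟨H, hH⟩ := (mem_filter.mp hS).2
  refine ⟨S, H, hH, fun v => ?_⟩
  by_contra! hfar
  obtain ⟨u, huS, H', hH'⟩ := hH.exists_insert hconn hfar
  have := hmax (insert u S) (by simpa using ⟨H', hH'⟩)
  rw [card_insert_of_notMem huS] at this
  omega

end SimpleGraph

open SimpleGraph in
theorem connected_two_hop_dominating_subgraph_general
    {V : Type*} [Fintype V] (G : SimpleGraph V) [DecidableRel G.Adj]
    (k : ℕ)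
    (hconn : G.Connected) (hdeg : ∀ v : V, k ≤ G.degree v) :
    ∃ H : G.Subgraph, H.Connected ∧
      H.verts.ncard ≤ 3 * (Fintype.card V / (k + 1)) - 2 ∧
      ∀ v : V, ∃ u ∈ H.verts, G.dist u v ≤ 2 := by
  classical
  obtain ⟨S, H, hH, hdom⟩ := hconn.exists_isPackingConnector_dominating
  have hS : #S ≤ Fintype.card V / (k + 1) := (Nat.le_div_iff_mul_le k.succ_pos).mpr
    (card_mul_succ_le_card_of_pairwise_three_le_dist hdeg hH.pairwise_three_le_dist)
  refine ⟨H, hH.connected, ?_, fun v => ?_⟩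
  · have := hH.ncard_add_two_le
    omega
  · obtain ⟨s, hs, hsv⟩ := hdom v
    exact ⟨s, hH.subset_verts hs, hsv⟩

/-- **Lemma (connected 2-hop dominating set).**
Let `k ≥ 1` and let `G` be a connected finite simple graph on `n ≥ 1` vertices with minimum
degree at least `k`. Then `G` has a connected subgraph `H` with at most `3⌊n/(k+1)⌋ - 2`
vertices such that every vertex of `G` is at distance (in `G`) at most `2` from some
vertex of `H`. -/
theorem connected_two_hop_dominating_subgraph
    {V : Type*} [Fintype V] (G : SimpleGraph V) [DecidableRel G.Adj]
    (k : ℕ) (hk : 1 ≤ k) (hn : 1 ≤ Fintype.card V)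
    (hconn : G.Connected) (hdeg : ∀ v : V, k ≤ G.degree v) :
    ∃ H : G.Subgraph, H.Connected ∧
      H.verts.ncard ≤ 3 * (Fintype.card V / (k + 1)) - 2 ∧
      ∀ v : V, ∃ u ∈ H.verts, G.dist u v ≤ 2 :=
  connected_two_hop_dominating_subgraph_general G k hconn hdeg
end

section
/- Let F be a connected finite simple graph on at least 4 vertices, let v be a vertex of F of degree 2 with (distinct) neighbors u and w, and let F' be the graph obtained from F by deleting v and adding the edge uw (if not already present). Then F' is connected and γ_c(F) ≤ γ_c(F') + 1. -/
/-- `S` is a connected dominating set of `G`: the induced subgraph on `S` is connected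
(hence nonempty), and every vertex of `G` is in `S` or has a neighbor in `S`. -/
def IsConnDomSet {V : Type*} (G : SimpleGraph V) (S : Set V) : Prop :=
  (G.induce S).Connected ∧ ∀ v : V, v ∈ S ∨ ∃ u ∈ S, G.Adj u v

/-- The connected domination number `γ_c(G)`: the minimum size of a connected dominating
set of `G`. -/
noncomputable def connDomNum {V : Type*} [Fintype V] (G : SimpleGraph V) : ℕ :=
  sInf {m : ℕ | ∃ S : Set V, IsConnDomSet G S ∧ S.ncard = m}

/-!
Sending `v` to `u` maps `F` onto the suppressed graph `F'` so that every edge of `F` becomes a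
vertex or an edge of `F'`; hence `F'` is connected. Conversely, a connected dominating set `T`
of `F'` becomes one of `F` after adding a single vertex. If `T` meets `{u, w}`, add `v`: the
path `u v w` replaces the new edge `uw`, and `v` dominates `u` and `w`. Otherwise neither `u`
nor `w` lies in `T`, so the new edge plays no role; add `u`, which `T` dominates through an
edge of `F` and which dominates `v`.
-/

open SimpleGraph Set

namespace SimpleGraph

variable {V W : Type*}

theorem Reachable.lift {G : SimpleGraph V} {H : SimpleGraph W} (f : V → W)
    (hf : ∀ ⦃x y⦄, G.Adj x y → H.Reachable (f x) (f y)) {x y : V} (h : G.Reachable x y) :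
    H.Reachable (f x) (f y) := by
  obtain ⟨p⟩ := h
  induction p with
  | nil => rfl
  | cons hadj _ ih => exact (hf hadj).trans ih

theorem Connected.of_surjective_lift {G : SimpleGraph V} {H : SimpleGraph W} (hG : G.Connected)
    (f : V → W) (hsurj : Function.Surjective f)
    (hf : ∀ ⦃x y⦄, G.Adj x y → H.Reachable (f x) (f y)) : H.Connected := by
  obtain ⟨x₀⟩ := hG.nonempty
  refine (connected_iff_exists_forall_reachable H).2 ⟨f x₀, fun y ↦ ?_⟩
  obtain ⟨x, rfl⟩ := hsurj y
  exact (hG.preconnected x₀ x).lift f hf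

theorem connected_induce_insert {G H : SimpleGraph V} {T : Set V} {z t : V}
    (hT : (G.induce T).Connected) (ht : t ∈ T) (hzt : H.Adj t z)
    (hlift : ∀ ⦃x y : V⦄ (hx : x ∈ T) (hy : y ∈ T), G.Adj x y →
      (H.induce (insert z T)).Reachable ⟨x, mem_insert_of_mem z hx⟩
        ⟨y, mem_insert_of_mem z hy⟩) :
    (H.induce (insert z T)).Connected := by
  refine (connected_iff_exists_forall_reachable _).2 ⟨⟨t, mem_insert_of_mem z ht⟩, ?_⟩
  rintro ⟨y, rfl | hy⟩
  · exact Adj.reachable (G := H.induce (insert y T)) hzt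
  · exact (hT.preconnected ⟨t, ht⟩ ⟨y, hy⟩).lift (inclusion (subset_insert z T))
      (fun a b hab ↦ hlift a.2 b.2 hab)

end SimpleGraph

section ConnDomSet

variable {V : Type*} {G : SimpleGraph V}

theorem isConnDomSet_univ (hG : G.Connected) : IsConnDomSet G univ :=
  ⟨(induceUnivIso G).connected_iff.2 hG, fun x ↦ .inl (mem_univ x)⟩

theorem IsConnDomSet.image_val {A : Set V} {S : Set A} (hS : IsConnDomSet (G.induce A) S) :
    (G.induce (Subtype.val '' S)).Connected ∧
      ∀ x ∈ A, x ∈ Subtype.val '' S ∨ ∃ s ∈ Subtype.val '' S, G.Adj s x := by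
  refine ⟨hS.1.map ⟨fun z ↦ ⟨z.1.1, z.1, z.2, rfl⟩, id⟩ ?_, fun x hx ↦ ?_⟩
  · rintro ⟨_, ⟨x, hxS, rfl⟩⟩
    exact ⟨⟨x, hxS⟩, rfl⟩
  · rcases hS.2 ⟨x, hx⟩ with hxS | ⟨s, hsS, hsx⟩
    · exact .inl ⟨_, hxS, rfl⟩
    · exact .inr ⟨s, ⟨s, hsS, rfl⟩, hsx⟩

variable [Fintype V]

theorem connDomNum_le_ncard {S : Set V} (hS : IsConnDomSet G S) : connDomNum G ≤ S.ncard :=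
  Nat.sInf_le ⟨S, hS, rfl⟩

theorem exists_isConnDomSet_ncard_eq_connDomNum (hG : G.Connected) :
    ∃ S, IsConnDomSet G S ∧ S.ncard = connDomNum G :=
  Nat.sInf_mem (s := {m | ∃ S, IsConnDomSet G S ∧ S.ncard = m})
    ⟨_, univ, isConnDomSet_univ hG, rfl⟩

end ConnDomSet

section Suppress

variable {V : Type*} {F : SimpleGraph V} {u v w : V} {T : Set V}

theorem adj_or_eq_of_sup_fromEdgeSet_adj {x y : V} (h : (F ⊔ fromEdgeSet {s(u, w)}).Adj x y) :
    F.Adj x y ∨ (x = u ∧ y = w) ∨ (x = w ∧ y = u) := by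
  rcases h with h | ⟨h, -⟩
  · exact .inl h
  · exact .inr (Sym2.eq_iff.1 h)

theorem adj_of_sup_fromEdgeSet_adj {x y : V} (h : (F ⊔ fromEdgeSet {s(u, w)}).Adj x y)
    (hxu : x ≠ u) (hxw : x ≠ w) : F.Adj x y := by
  rcases adj_or_eq_of_sup_fromEdgeSet_adj h with h | ⟨rfl, -⟩ | ⟨rfl, -⟩
  exacts [h, absurd rfl hxu, absurd rfl hxw]

theorem eq_or_eq_of_adj_of_degree_eq_two [Fintype V] [DecidableRel F.Adj]
    (hv : F.degree v = 2) (huw : u ≠ w) (hvu : F.Adj v u) (hvw : F.Adj v w) {x : V}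
    (hvx : F.Adj v x) : x = u ∨ x = w := by
  classical
  have hsub : ({u, w} : Finset V) ⊆ F.neighborFinset v := by
    simp [Finset.insert_subset_iff, hvu, hvw]
  have hnbr : ({u, w} : Finset V) = F.neighborFinset v :=
    Finset.eq_of_subset_of_card_le hsub <| by
      rw [card_neighborFinset_eq_degree, hv, Finset.card_pair huw]
  have hx : x ∈ ({u, w} : Finset V) := hnbr ▸ (F.mem_neighborFinset v x).2 hvx
  simpa using hx

theorem connected_induce_ne_sup_fromEdgeSet (hF : F.Connected) (huw : u ≠ w) (hvu : F.Adj v u)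
    (hnbr : ∀ x, F.Adj v x → x = u ∨ x = w) :
    ((F ⊔ fromEdgeSet {s(u, w)}).induce {x | x ≠ v}).Connected := by
  classical
  set H := (F ⊔ fromEdgeSet {s(u, w)}).induce {x | x ≠ v}
  let f : V → {x | x ≠ v} := fun x ↦ if hx : x = v then ⟨u, hvu.ne'⟩ else ⟨x, hx⟩
  have hf_ne {x : V} (hx : x ≠ v) : f x = ⟨x, hx⟩ := dif_neg hx
  have hf_v {x : V} (hvx : F.Adj v x) : H.Reachable (f v) (f x) := by
    rw [show f v = ⟨u, hvu.ne'⟩ from dif_pos rfl, hf_ne hvx.ne']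
    rcases hnbr x hvx with rfl | rfl
    · rfl
    · exact Adj.reachable (G := H) (.inr ⟨rfl, huw⟩)
  refine hF.of_surjective_lift f (fun y ↦ ⟨y, hf_ne y.2⟩) fun x y hxy ↦ ?_
  rcases eq_or_ne x v with rfl | hx
  · exact hf_v hxy
  rcases eq_or_ne y v with rfl | hy
  · exact (hf_v hxy.symm).symm
  rw [hf_ne hx, hf_ne hy]
  exact Adj.reachable (G := H) (.inl hxy)

theorem reachable_induce_insert_of_sup_fromEdgeSet_adj (hvu : F.Adj v u) (hvw : F.Adj v w)
    {z : V} (hz : u ∈ T → w ∈ T → z = v)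
    {x y : V} (hx : x ∈ T) (hy : y ∈ T) (h : (F ⊔ fromEdgeSet {s(u, w)}).Adj x y) :
    (F.induce (insert z T)).Reachable ⟨x, mem_insert_of_mem z hx⟩
      ⟨y, mem_insert_of_mem z hy⟩ := by
  have hadj {a b : V} (ha : a ∈ insert z T) (hb : b ∈ insert z T) (hab : F.Adj a b) :
      (F.induce (insert z T)).Reachable ⟨a, ha⟩ ⟨b, hb⟩ :=
    Adj.reachable (G := F.induce _) hab
  rcases adj_or_eq_of_sup_fromEdgeSet_adj h with h | ⟨rfl, rfl⟩ | ⟨rfl, rfl⟩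
  · exact hadj _ _ h
  · obtain rfl := hz hx hy
    exact (hadj _ (mem_insert z T) hvu.symm).trans (hadj _ _ hvw)
  · obtain rfl := hz hy hx
    exact (hadj _ (mem_insert z T) hvw.symm).trans (hadj _ _ hvu)

theorem isConnDomSet_insert_of_mem (hvu : F.Adj v u) (hvw : F.Adj v w)
    (hT : ((F ⊔ fromEdgeSet {s(u, w)}).induce T).Connected)
    (hdom : ∀ x ≠ v, x ∈ T ∨ ∃ s ∈ T, (F ⊔ fromEdgeSet {s(u, w)}).Adj s x)
    (huwT : u ∈ T ∨ w ∈ T) : IsConnDomSet F (insert v T) := by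
  refine ⟨?_, fun x ↦ ?_⟩
  · obtain ⟨t, ht, htv⟩ : ∃ t ∈ T, F.Adj t v :=
      huwT.elim (⟨u, ·, hvu.symm⟩) (⟨w, ·, hvw.symm⟩)
    exact connected_induce_insert hT ht htv fun _ _ hx hy ↦
      reachable_induce_insert_of_sup_fromEdgeSet_adj hvu hvw (fun _ _ ↦ rfl) hx hy
  rcases eq_or_ne x v with rfl | hxv
  · exact .inl (mem_insert x T)
  rcases hdom x hxv with hx | ⟨s, hs, hsx⟩
  · exact .inl (mem_insert_of_mem v hx)
  rcases adj_or_eq_of_sup_fromEdgeSet_adj hsx with h | ⟨-, rfl⟩ | ⟨-, rfl⟩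
  · exact .inr ⟨s, mem_insert_of_mem v hs, h⟩
  · exact .inr ⟨v, mem_insert v T, hvw⟩
  · exact .inr ⟨v, mem_insert v T, hvu⟩

theorem isConnDomSet_insert_of_notMem (hvu : F.Adj v u) (hvw : F.Adj v w)
    (hT : ((F ⊔ fromEdgeSet {s(u, w)}).induce T).Connected)
    (hdom : ∀ x ≠ v, x ∈ T ∨ ∃ s ∈ T, (F ⊔ fromEdgeSet {s(u, w)}).Adj s x)
    (huT : u ∉ T) (hwT : w ∉ T) : IsConnDomSet F (insert u T) := by
  have hF_adj {s x : V} (hs : s ∈ T) (hsx : (F ⊔ fromEdgeSet {s(u, w)}).Adj s x) : F.Adj s x :=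
    adj_of_sup_fromEdgeSet_adj hsx (ne_of_mem_of_not_mem hs huT) (ne_of_mem_of_not_mem hs hwT)
  refine ⟨?_, fun x ↦ ?_⟩
  · obtain ⟨t, ht, htu⟩ : ∃ t ∈ T, F.Adj t u := by
      rcases hdom u hvu.ne' with hu | ⟨t, ht, htu⟩
      exacts [absurd hu huT, ⟨t, ht, hF_adj ht htu⟩]
    exact connected_induce_insert hT ht htu fun _ _ hx hy ↦
      reachable_induce_insert_of_sup_fromEdgeSet_adj hvu hvw (fun hu _ ↦ absurd hu huT) hx hy
  rcases eq_or_ne x v with rfl | hxv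
  · exact .inr ⟨u, mem_insert u T, hvu.symm⟩
  rcases hdom x hxv with hx | ⟨s, hs, hsx⟩
  · exact .inl (mem_insert_of_mem u hx)
  · exact .inr ⟨s, mem_insert_of_mem u hs, hF_adj hs hsx⟩

theorem exists_isConnDomSet_ncard_le_add_one (hvu : F.Adj v u) (hvw : F.Adj v w)
    (hT : ((F ⊔ fromEdgeSet {s(u, w)}).induce T).Connected)
    (hdom : ∀ x ≠ v, x ∈ T ∨ ∃ s ∈ T, (F ⊔ fromEdgeSet {s(u, w)}).Adj s x) :
    ∃ S, IsConnDomSet F S ∧ S.ncard ≤ T.ncard + 1 := by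
  by_cases huwT : u ∈ T ∨ w ∈ T
  · exact ⟨_, isConnDomSet_insert_of_mem hvu hvw hT hdom huwT, ncard_insert_le v T⟩
  · obtain ⟨huT, hwT⟩ := not_or.1 huwT
    exact ⟨_, isConnDomSet_insert_of_notMem hvu hvw hT hdom huT hwT, ncard_insert_le u T⟩

end Suppress

theorem connDomNum_le_suppress_add_one_general
    {V : Type*} [Fintype V] [DecidableEq V] (F : SimpleGraph V) [DecidableRel F.Adj]
    (hconn : F.Connected)
    (v u w : V) (huw : u ≠ w) (hvu : F.Adj v u) (hvw : F.Adj v w)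
    (hv : F.degree v = 2) :
    ((F ⊔ SimpleGraph.fromEdgeSet {s(u, w)}).induce {x : V | x ≠ v}).Connected ∧
      connDomNum F ≤
        connDomNum ((F ⊔ SimpleGraph.fromEdgeSet {s(u, w)}).induce {x : V | x ≠ v}) + 1 := by
  have hsupp := connected_induce_ne_sup_fromEdgeSet hconn huw hvu
    fun _ ↦ eq_or_eq_of_adj_of_degree_eq_two hv huw hvu hvw
  refine ⟨hsupp, ?_⟩
  obtain ⟨S', hS', hS'card⟩ := exists_isConnDomSet_ncard_eq_connDomNum hsupp
  obtain ⟨hT, hdom⟩ := hS'.image_val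
  obtain ⟨S, hS, hScard⟩ := exists_isConnDomSet_ncard_le_add_one hvu hvw hT hdom
  calc connDomNum F ≤ S.ncard := connDomNum_le_ncard hS
    _ ≤ (Subtype.val '' S').ncard + 1 := hScard
    _ = _ := by rw [ncard_image_of_injective _ Subtype.val_injective, hS'card]

/-- **Claim (suppressing a degree-2 vertex).** Let `F` be a connected finite simple graph
on at least `4` vertices, let `v` have degree `2` with distinct neighbors `u` and `w`, and
let `F'` be obtained from `F` by deleting `v` and adding the edge `uw` (if not present).
Then `F'` is connected and `γ_c(F) ≤ γ_c(F') + 1`. -/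
theorem connDomNum_le_suppress_add_one
    {V : Type*} [Fintype V] [DecidableEq V] (F : SimpleGraph V) [DecidableRel F.Adj]
    (hconn : F.Connected) (h4 : 4 ≤ Fintype.card V)
    (v u w : V) (huw : u ≠ w) (hvu : F.Adj v u) (hvw : F.Adj v w)
    (hv : F.degree v = 2) :
    ((F ⊔ SimpleGraph.fromEdgeSet {s(u, w)}).induce {x : V | x ≠ v}).Connected ∧
      connDomNum F ≤
        connDomNum ((F ⊔ SimpleGraph.fromEdgeSet {s(u, w)}).induce {x : V | x ≠ v}) + 1 :=
  connDomNum_le_suppress_add_one_general F hconn v u w huw hvu hvw hv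
end

section
/- For every ε ∈ (0, 1] there exists a constant C = C(ε) such that the following holds: every connected finite simple graph G on n ≥ 3 vertices in which at least εn vertices have degree different from 2 satisfies γ_c(G) ≤ (1 − ε/12)·n + C. -/
open Finset

namespace SimpleGraph

section Connectivity

variable {V : Type*} {G : SimpleGraph V}

lemma connected_induce_insert_s9 {S : Set V} {s u : V} (hS : (G.induce S).Connected) (hs : s ∈ S)
    (hsu : G.Adj s u) : (G.induce (insert u S)).Connected := by
  have hset : insert u S = S ∪ {s, u} := by
    ext v
    simp only [Set.mem_insert_iff, Set.mem_union, Set.mem_singleton_iff]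
    constructor
    · rintro (rfl | hv)
      exacts [Or.inr (Or.inr rfl), Or.inl hv]
    · rintro (hv | rfl | rfl)
      exacts [Or.inr hv, Or.inr hs, Or.inl rfl]
  rw [hset]
  exact induce_union_connected hS.preconnected (induce_pair_connected_of_adj hsu).preconnected
    ⟨s, hs, Set.mem_insert s {u}⟩

lemma Connected.exists_adj_of_mem_of_notMem (hG : G.Connected) {R : Set V} {a b : V}
    (ha : a ∈ R) (hb : b ∉ R) : ∃ v ∈ R, ∃ x ∉ R, G.Adj v x := by
  obtain ⟨d, -, hd₁, hd₂⟩ := (hG a b).some.exists_boundary_dart R ha hb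
  exact ⟨_, hd₁, _, hd₂, d.adj⟩

end Connectivity

variable {V : Type*} [Fintype V] {G : SimpleGraph V} [DecidableRel G.Adj]

lemma two_le_degree_of_adj {v a b : V} (ha : G.Adj v a) (hb : G.Adj v b) (hab : a ≠ b) :
    2 ≤ G.degree v := by
  rw [← card_neighborFinset_eq_degree]
  exact one_lt_card.2 ⟨a, by simpa using ha, b, by simpa using hb, hab⟩

lemma Connected.exists_two_le_degree (hG : G.Connected) (hV : 3 ≤ Fintype.card V) :
    ∃ v, 2 ≤ G.degree v := by
  classical
  obtain ⟨a, b, hab⟩ := Fintype.exists_pair_of_one_lt_card (by omega : 1 < Fintype.card V)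
  obtain ⟨a, rfl, d, hd, had⟩ := hG.exists_adj_of_mem_of_notMem (Set.mem_singleton a)
    (by simpa using hab.symm)
  obtain ⟨c, hc⟩ : ∃ c, c ∉ ({a, d} : Finset V) := by
    by_contra! h
    have := card_le_card (fun v _ => h v : univ ⊆ {a, d})
    have := card_le_two (a := a) (b := d)
    simp only [card_univ] at *
    omega
  obtain ⟨w, hw, x, hx, hwx⟩ :=
    hG.exists_adj_of_mem_of_notMem (R := {a, d}) (a := a) (b := c) (by simp) (by simpa using hc)
  simp only [Set.mem_insert_iff, Set.mem_singleton_iff, not_or] at hw hx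
  rcases hw with rfl | rfl
  · exact ⟨w, two_le_degree_of_adj hwx had hx.2⟩
  · exact ⟨w, two_le_degree_of_adj hwx had.symm hx.1⟩

section LeafyTree

variable {S R : Finset V}

/-- `S` and `R \ S` are the internal vertices and the leaves of a tree in `G` with vertex
set `R`. -/
structure IsInternalSet (G : SimpleGraph V) [DecidableRel G.Adj] (S R : Finset V) : Prop where
  subset : S ⊆ R
  connected : (G.induce (S : Set V)).Connected
  dominates : ∀ x ∈ R, x ∈ S ∨ ∃ s ∈ S, G.Adj s x
  two_le_degree : ∀ s ∈ S, 2 ≤ G.degree s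

lemma IsInternalSet.two_le_degree_of_adj_notMem (h : IsInternalSet G S R) {u x : V} (hu : u ∈ R)
    (hx : x ∉ R) (hux : G.Adj u x) : 2 ≤ G.degree u := by
  obtain hu | ⟨s, hs, hsu⟩ := h.dominates u hu
  · exact h.two_le_degree u hu
  · exact two_le_degree_of_adj hsu.symm hux fun hsx => hx (hsx ▸ h.subset hs)

variable [DecidableEq V]

lemma IsInternalSet.expand (h : IsInternalSet G S R) {u x : V} {A : Finset V} (hu : u ∈ R)
    (hx : x ∉ R) (hux : G.Adj u x) (hA : ∀ a ∈ A, G.Adj u a) :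
    IsInternalSet G (insert u S) (R ∪ A) where
  subset := insert_subset (mem_union_left _ hu) (h.subset.trans subset_union_left)
  connected := by
    rw [coe_insert]
    obtain hu | ⟨s, hs, hsu⟩ := h.dominates u hu
    · rw [Set.insert_eq_of_mem (mem_coe.2 hu)]
      exact h.connected
    · exact connected_induce_insert_s9 h.connected hs hsu
  dominates y hy := by
    obtain hy | hy := mem_union.1 hy
    · obtain hy | ⟨s, hs, hsy⟩ := h.dominates y hy
      · exact Or.inl (mem_insert_of_mem hy)
      · exact Or.inr ⟨s, mem_insert_of_mem hs, hsy⟩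
    · exact Or.inr ⟨u, mem_insert_self u S, hA y hy⟩
  two_le_degree s hs := by
    obtain rfl | hs := mem_insert.1 hs
    · exact h.two_le_degree_of_adj_notMem hu hx hux
    · exact h.two_le_degree s hs

def deadLeaves (G : SimpleGraph V) [DecidableRel G.Adj] (S R : Finset V) : Finset V :=
  {v ∈ R \ S | G.neighborFinset v ⊆ R}

def LeafBound (G : SimpleGraph V) [DecidableRel G.Adj] (S R : Finset V) : Prop :=
  #{v ∈ R | 3 ≤ G.degree v} + 3 * #S ≤ 3 * #R + #(deadLeaves G S R)

structure IsLeafyTree (G : SimpleGraph V) [DecidableRel G.Adj] (S R : Finset V) : Prop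
    extends IsInternalSet G S R where
  leafBound : LeafBound G S R

lemma deadLeaves_subset {S' R' : Finset V} (hR : R ⊆ R')
    (hS' : ∀ v ∈ S', v ∈ S ∨ ∃ x ∉ R, G.Adj v x) : deadLeaves G S R ⊆ deadLeaves G S' R' := by
  intro v hv
  simp only [deadLeaves, mem_filter, mem_sdiff] at hv ⊢
  obtain ⟨⟨hvR, hvS⟩, hN⟩ := hv
  refine ⟨⟨hR hvR, fun hv' => ?_⟩, hN.trans hR⟩
  obtain hv' | ⟨x, hx, hvx⟩ := hS' v hv'
  · exact hvS hv'
  · exact hx (hN (by simpa using hvx))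

lemma exists_mem_deadLeaves_insert_union {u x : V} (hx : x ∉ R) (hdeg : 3 ≤ G.degree x)
    (hxR : #(G.neighborFinset x \ R) ≤ 1) (hS : ∀ s ∈ S, ∀ y ∉ R, ¬G.Adj s y)
    (hR : ∀ v ∈ R, #(G.neighborFinset v \ R) ≤ 1) :
    ∃ w ∈ deadLeaves G (insert u S) (R ∪ {x}), w ∉ deadLeaves G S R := by
  have hx₂ : 1 < #(G.neighborFinset x ∩ R) := by
    have := card_sdiff_add_card_inter (G.neighborFinset x) R
    rw [card_neighborFinset_eq_degree] at this
    omega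
  obtain ⟨w, hw, hwu⟩ := exists_mem_ne hx₂ u
  rw [mem_inter, mem_neighborFinset] at hw
  have hxw : x ∈ G.neighborFinset w \ R := by simpa [hx] using hw.1.symm
  have hwS : w ∉ S := fun hwS => hS w hwS x hx hw.1.symm
  refine ⟨w, ?_, fun hdead => (mem_sdiff.1 hxw).2 ((mem_filter.1 hdead).2 (mem_sdiff.1 hxw).1)⟩
  simp only [deadLeaves, mem_filter, mem_sdiff, mem_union, mem_insert, mem_singleton, not_or]
  refine ⟨⟨Or.inl hw.2, hwu, hwS⟩, fun y hy => ?_⟩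
  by_cases hyR : y ∈ R
  · exact mem_union_left _ hyR
  · have := card_le_one.1 (hR w hw.2) y (mem_sdiff.2 ⟨hy, hyR⟩) x hxw
    simp [this]

lemma LeafBound.union (h : LeafBound G S R) {S' A : Finset V} {m k : ℕ} (hA : Disjoint R A)
    (hS' : #S' ≤ #S + m) (hdead : #(deadLeaves G S R) + k ≤ #(deadLeaves G S' (R ∪ A)))
    (hcost : #{v ∈ A | 3 ≤ G.degree v} + 3 * m ≤ 3 * #A + k) : LeafBound G S' (R ∪ A) := by
  unfold LeafBound at *
  rw [filter_union, card_union_of_disjoint (disjoint_filter_filter hA), card_union_of_disjoint hA]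
  omega

namespace IsLeafyTree

lemma attach (h : IsLeafyTree G S R) {s x : V} (hs : s ∈ S) (hx : x ∉ R) (hsx : G.Adj s x) :
    IsLeafyTree G S (R ∪ {x}) := by
  have h' := h.expand (A := {x}) (h.subset hs) hx hsx (by simpa)
  rw [insert_eq_of_mem hs] at h'
  refine ⟨h', h.leafBound.union (m := 0) (k := 0) (disjoint_singleton_right.2 hx) le_rfl ?_ ?_⟩
  · exact card_le_card (deadLeaves_subset subset_union_left fun v hv => Or.inl hv)
  · have := card_filter_le {x} fun v => 3 ≤ G.degree v
    simp only [card_singleton] at this ⊢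
    omega

lemma expand_two (h : IsLeafyTree G S R) {u y z : V} (hu : u ∈ R) (hy : y ∉ R) (hz : z ∉ R)
    (hyz : y ≠ z) (huy : G.Adj u y) (huz : G.Adj u z) :
    IsLeafyTree G (insert u S) (R ∪ {y, z}) := by
  refine ⟨h.expand hu hy huy (by simp [huy, huz]), h.leafBound.union (m := 1) (k := 0)
    (by simp [hy, hz]) (card_insert_le u S) ?_ ?_⟩
  · refine card_le_card (deadLeaves_subset subset_union_left fun v hv => ?_)
    obtain rfl | hv := mem_insert.1 hv
    exacts [Or.inr ⟨y, hy, huy⟩, Or.inl hv]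
  · have := card_filter_le {y, z} fun v => 3 ≤ G.degree v
    rw [card_pair hyz] at this ⊢
    omega

lemma expand_double (h : IsLeafyTree G S R) {u x y z : V} (hu : u ∈ R) (hx : x ∉ R)
    (hy : y ∉ R) (hz : z ∉ R) (hyz : y ≠ z) (hux : G.Adj u x) (hxy : G.Adj x y)
    (hxz : G.Adj x z) : IsLeafyTree G (insert x (insert u S)) (R ∪ {x, y, z}) := by
  have hxy' : x ≠ y := G.ne_of_adj hxy
  have hxz' : x ≠ z := G.ne_of_adj hxz
  have h' := (h.expand (A := {x}) hu hx hux (by simpa)).expand (A := {y, z}) (x := y)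
    (by simp) (by simp [hy, hxy'.symm]) hxy (by simp [hxy, hxz])
  rw [union_assoc, ← insert_eq] at h'
  refine ⟨h', h.leafBound.union (m := 2) (k := 0) (by simp [hx, hy, hz]) ?_ ?_ ?_⟩
  · exact (card_insert_le x _).trans (by simpa using card_insert_le u S)
  · refine card_le_card (deadLeaves_subset subset_union_left fun v hv => ?_)
    simp only [mem_insert] at hv
    obtain rfl | rfl | hv := hv
    exacts [Or.inr ⟨y, hy, hxy⟩, Or.inr ⟨x, hx, hux⟩, Or.inl hv]
  · have := card_filter_le {x, y, z} fun v => 3 ≤ G.degree v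
    rw [card_insert_of_notMem (by simp [hxy', hxz']), card_pair hyz] at this ⊢
    omega

lemma expand_one (h : IsLeafyTree G S R) {u x : V} (hu : u ∈ R) (hx : x ∉ R) (hux : G.Adj u x)
    (hdead : 3 ≤ G.degree x →
      ∃ w ∈ deadLeaves G (insert u S) (R ∪ {x}), w ∉ deadLeaves G S R) :
    IsLeafyTree G (insert u S) (R ∪ {x}) := by
  have hsub : deadLeaves G S R ⊆ deadLeaves G (insert u S) (R ∪ {x}) := by
    refine deadLeaves_subset subset_union_left fun v hv => ?_
    obtain rfl | hv := mem_insert.1 hv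
    exacts [Or.inr ⟨x, hx, hux⟩, Or.inl hv]
  refine ⟨h.expand hu hx hux (by simpa), ?_⟩
  have hdisj : Disjoint R {x} := disjoint_singleton_right.2 hx
  by_cases hdeg : 3 ≤ G.degree x
  · obtain ⟨w, hw, hw'⟩ := hdead hdeg
    refine h.leafBound.union (m := 1) (k := 1) hdisj (card_insert_le u S)
      (card_lt_card ((ssubset_iff_of_subset hsub).2 ⟨w, hw, hw'⟩)) ?_
    have := card_filter_le {x} fun v => 3 ≤ G.degree v
    simp only [card_singleton] at this ⊢
    omega
  · exact h.leafBound.union (m := 1) (k := 0) hdisj (card_insert_le u S) (card_le_card hsub)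
      (by simp; omega)

lemma singleton {v : V} (hv : 2 ≤ G.degree v) :
    IsLeafyTree G {v} (insert v (G.neighborFinset v)) where
  subset := by simp
  connected := by
    rw [coe_singleton]
    exact Connected.of_subsingleton
  dominates x hx := by
    obtain rfl | hx := mem_insert.1 hx
    · exact Or.inl (mem_singleton_self x)
    · exact Or.inr ⟨v, mem_singleton_self v, by simpa using hx⟩
  two_le_degree := by simpa
  leafBound := by
    have := card_filter_le (insert v (G.neighborFinset v)) fun w => 3 ≤ G.degree w
    rw [card_insert_of_notMem (by simp), card_neighborFinset_eq_degree] at this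
    rw [LeafBound, card_insert_of_notMem (by simp), card_neighborFinset_eq_degree, card_singleton]
    omega

lemma exists_ssuperset (hG : G.Connected) (h : IsLeafyTree G S R) (hR : R ≠ univ) :
    ∃ S' R', IsLeafyTree G S' R' ∧ R ⊂ R' := by
  have lt_union {A : Finset V} {a : V} (ha : a ∈ A) (haR : a ∉ R) : R ⊂ R ∪ A :=
    (ssubset_iff_of_subset subset_union_left).2 ⟨a, mem_union_right R ha, haR⟩
  obtain ⟨b, -, hb⟩ := exists_of_ssubset (ssubset_univ_iff.2 hR)
  obtain ⟨⟨s₀, hs₀⟩⟩ := h.connected.nonempty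
  obtain ⟨u, hu, x, hx, hux⟩ :=
    hG.exists_adj_of_mem_of_notMem (R := (R : Set V)) (h.subset hs₀) (mem_coe.not.2 hb)
  rw [mem_coe] at hu hx
  by_cases hS : ∃ s ∈ S, ∃ y ∉ R, G.Adj s y
  · obtain ⟨s, hs, y, hy, hsy⟩ := hS
    exact ⟨_, _, h.attach hs hy hsy, lt_union (mem_singleton_self y) hy⟩
  push Not at hS
  by_cases hL : ∃ v ∈ R, 1 < #(G.neighborFinset v \ R)
  · obtain ⟨v, hv, hv₂⟩ := hL
    obtain ⟨y, hy, z, hz, hyz⟩ := one_lt_card.1 hv₂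
    simp only [mem_sdiff, mem_neighborFinset] at hy hz
    exact ⟨_, _, h.expand_two hv hy.2 hz.2 hyz hy.1 hz.1, lt_union (mem_insert_self y {z}) hy.2⟩
  push Not at hL
  by_cases hx₂ : 1 < #(G.neighborFinset x \ R)
  · obtain ⟨y, hy, z, hz, hyz⟩ := one_lt_card.1 hx₂
    simp only [mem_sdiff, mem_neighborFinset] at hy hz
    exact ⟨_, _, h.expand_double hu hx hy.2 hz.2 hyz hux hy.1 hz.1,
      lt_union (mem_insert_self x {y, z}) hx⟩
  · push Not at hx₂
    exact ⟨_, _, h.expand_one hu hx hux fun hdeg =>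
      exists_mem_deadLeaves_insert_union hx hdeg hx₂ hS hL, lt_union (mem_singleton_self x) hx⟩

theorem exists_univ (hG : G.Connected) {S R : Finset V} (h : IsLeafyTree G S R) :
    ∃ S', IsLeafyTree G S' univ := by
  by_cases hR : R = univ
  · exact ⟨S, hR ▸ h⟩
  obtain ⟨S', R', h', hRR'⟩ := h.exists_ssuperset hG hR
  exact h'.exists_univ hG
termination_by #Rᶜ
decreasing_by exact card_lt_card (compl_ssubset_compl.2 hRR')

lemma isConnDomSet (h : IsLeafyTree G S univ) : IsConnDomSet G (S : Set V) :=
  ⟨h.connected, fun v => by simpa using h.dominates v (mem_univ v)⟩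

lemma card_degree_ne_two_add_le (h : IsLeafyTree G S univ) :
    #{v | G.degree v ≠ 2} + 5 * #S ≤ 5 * Fintype.card V := by
  have hsplit : #{v | G.degree v ≠ 2} ≤ #{v | G.degree v ≤ 1} + #{v | 3 ≤ G.degree v} := by
    refine (card_le_card fun v hv => ?_).trans (card_union_le _ _)
    simp only [mem_filter, mem_union, mem_univ, true_and] at hv ⊢
    omega
  have hlow : #{v | G.degree v ≤ 1} ≤ #Sᶜ := card_le_card fun v hv => by
    rw [mem_compl]
    intro hvS
    have := h.two_le_degree v hvS
    simp only [mem_filter, mem_univ, true_and] at hv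
    omega
  have hdead : #(deadLeaves G S univ) ≤ #Sᶜ :=
    card_le_card fun v hv => by simpa using (mem_sdiff.1 (mem_filter.1 hv).1).2
  have hS := card_add_card_compl S
  have := h.leafBound
  rw [LeafBound, card_univ] at this
  omega

end IsLeafyTree

end LeafyTree

end SimpleGraph

lemma connDomNum_le_card {V : Type*} [Fintype V] {G : SimpleGraph V} {S : Finset V}
    (h : IsConnDomSet G S) : connDomNum G ≤ #S :=
  Nat.sInf_le ⟨S, h, Set.ncard_coe_finset S⟩

lemma five_mul_connDomNum_add_card_degree_ne_two_le {V : Type*} [Fintype V] {G : SimpleGraph V}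
    [DecidableRel G.Adj] (hG : G.Connected) (hV : 3 ≤ Fintype.card V) :
    5 * connDomNum G + #{v | G.degree v ≠ 2} ≤ 5 * Fintype.card V := by
  classical
  obtain ⟨v, hv⟩ := hG.exists_two_le_degree hV
  obtain ⟨S, hS⟩ := (SimpleGraph.IsLeafyTree.singleton hv).exists_univ hG
  have := connDomNum_le_card hS.isConnDomSet
  have := hS.card_degree_ne_two_add_le
  omega

/-- **Theorem.** For every `ε ∈ (0,1]` there is a constant `C = C(ε)` such that every
connected finite simple graph on `n ≥ 3` vertices with at least `εn` vertices of degree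
different from `2` satisfies `γ_c(G) ≤ (1 - ε/12) n + C`. -/
theorem connDomNum_le_of_many_nondegree_two :
    ∀ ε : ℝ, 0 < ε → ε ≤ 1 → ∃ C : ℝ,
      ∀ (V : Type) [Fintype V] (G : SimpleGraph V) [DecidableRel G.Adj],
        G.Connected → 3 ≤ Fintype.card V →
        ε * Fintype.card V ≤ (Finset.univ.filter fun v : V => G.degree v ≠ 2).card →
        (connDomNum G : ℝ) ≤ (1 - ε / 12) * Fintype.card V + C := by
  intro ε hε _
  refine ⟨0, fun V _ G _ hG hV hmany => ?_⟩
  have h : (5 * connDomNum G + #{v | G.degree v ≠ 2} : ℝ) ≤ 5 * Fintype.card V := by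
    exact_mod_cast five_mul_connDomNum_add_card_degree_ne_two_le hG hV
  have : 0 ≤ ε * Fintype.card V := by positivity
  linarith
end
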